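/- Let P_{ŨX̃ỸZ̃} satisfy ℙ(Z̃ = X̃) = 1 (equivalently H(X̃|Ũ,Ỹ,Z̃) = 0 suffices). Then D(P_{X̃Ỹ}‖P_{XY}) + I(Ũ ∧ Ỹ|X̃) + I(Z̃ ∧ X̃|Ũ,Ỹ) + max{ I(Ũ ∧ X̃) − I(Ũ ∧ Ỹ) − R, 0 } ≥ D(P_{X̃Ỹ}‖P_{XY}) + max{ H(X̃|Ỹ) − R, 0 }. -/

import Mathlib

/-!
With `x` a function of `(u, y, z)`, the chain rule gives the identity
`I(u ∧ y | x) + I(z ∧ x | u, y) + I(u ∧ x) - I(u ∧ y) = H(x | y)`.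
Since both conditional mutual informations are nonnegative, `|H(x | y) - R|⁺` is at most their sum
plus `|I(u ∧ x) - I(u ∧ y) - R|⁺`. Nonnegativity of conditional mutual information is the
Gibbs-type bound `-log r ≥ 1 - r` applied to `r = p(f,h) p(g,h) / (p(f,g,h) p(h))`.
-/

open Real Finset
open scoped Classical

noncomputable section

/-- Shannon entropy (base 2) of a pmf on a finite type. -/
def ent {S : Type*} [Fintype S] (p : S → ℝ) : ℝ :=
  - ∑ s, p s * Real.logb 2 (p s)

/-- Pushforward pmf under a map. -/
def push {S T : Type*} [Fintype S] [Fintype T] (p : S → ℝ) (f : S → T) : T → ℝ :=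
  fun t => ∑ s, if f s = t then p s else 0

/-- Entropy of the random variable `f` under joint pmf `p`. -/
def entOf {S T : Type*} [Fintype S] [Fintype T] (p : S → ℝ) (f : S → T) : ℝ :=
  ent (push p f)

/-- Conditional entropy `H(f | g)` under joint pmf `p`. -/
def condEnt {S T V : Type*} [Fintype S] [Fintype T] [Fintype V]
    (p : S → ℝ) (f : S → T) (g : S → V) : ℝ :=
  entOf p (fun s => (f s, g s)) - entOf p g

/-- Mutual information `I(f ∧ g)` under joint pmf `p`. -/
def miOf {S T V : Type*} [Fintype S] [Fintype T] [Fintype V]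
    (p : S → ℝ) (f : S → T) (g : S → V) : ℝ :=
  entOf p f + entOf p g - entOf p (fun s => (f s, g s))

/-- Conditional mutual information `I(f ∧ g | h)` under joint pmf `p`. -/
def cmiOf {S T V W : Type*} [Fintype S] [Fintype T] [Fintype V] [Fintype W]
    (p : S → ℝ) (f : S → T) (g : S → V) (h : S → W) : ℝ :=
  condEnt p f h + condEnt p g h - condEnt p (fun s => (f s, g s)) h

/-- Kullback–Leibler divergence (base 2). -/
def kl {S : Type*} [Fintype S] (p q : S → ℝ) : ℝ :=
  ∑ s, p s * Real.logb 2 (p s / q s)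

end

section push

variable {S T V W : Type*} [Fintype S] [Fintype T] [Fintype V] [Fintype W]

lemma push_nonneg {p : S → ℝ} (hp : ∀ s, 0 ≤ p s) (f : S → T) (t : T) : 0 ≤ push p f t :=
  sum_nonneg fun s _ => by split_ifs <;> simp [hp s]

lemma le_push_apply {p : S → ℝ} (hp : ∀ s, 0 ≤ p s) (f : S → T) (s : S) :
    p s ≤ push p f (f s) := by
  simpa [push] using single_le_sum (f := fun i => if f i = f s then p i else 0)
    (fun i _ => by split_ifs <;> simp [hp i]) (mem_univ s)

lemma push_apply_pos {p : S → ℝ} (hp : ∀ s, 0 ≤ p s) (f : S → T) {s : S} (hs : 0 < p s) :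
    0 < push p f (f s) :=
  hs.trans_le (le_push_apply hp f s)

lemma sum_push_mul (p : S → ℝ) (f : S → T) (F : T → ℝ) :
    ∑ t, push p f t * F t = ∑ s, p s * F (f s) := by
  simp only [push, sum_mul, ite_mul, zero_mul]
  rw [sum_comm]
  exact sum_congr rfl fun s _ => by simp

lemma sum_push (p : S → ℝ) (f : S → T) : ∑ t, push p f t = ∑ s, p s := by
  simpa using sum_push_mul p f fun _ => 1

lemma sum_push_prod_mk_left (p : S → ℝ) (f : S → T) (h : S → W) (c : W) :
    ∑ a, push p (fun s => (f s, h s)) (a, c) = push p h c := by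
  simp only [push, Prod.mk.injEq, ite_and]
  rw [sum_comm]
  exact sum_congr rfl fun s _ => by simp

lemma entOf_eq_neg_sum (p : S → ℝ) (f : S → T) :
    entOf p f = -∑ s, p s * logb 2 (push p f (f s)) := by
  rw [entOf, ent, sum_push_mul p f fun t => logb 2 (push p f t)]

lemma entOf_congr (p : S → ℝ) {f : S → T} {g : S → V}
    (hfg : ∀ s s', f s = f s' ↔ g s = g s') : entOf p f = entOf p g := by
  simp only [entOf_eq_neg_sum, push, hfg]

/-- The density ratio `p(f|h) p(g|h) / p(f,g|h)` whose `-log` has expectation `I(f ∧ g | h)`. -/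
noncomputable def cmiRatio (p : S → ℝ) (f : S → T) (g : S → V) (h : S → W) (s : S) : ℝ :=
  push p (fun s => (f s, h s)) (f s, h s) * push p (fun s => (g s, h s)) (g s, h s)
    / (push p (fun s => ((f s, g s), h s)) ((f s, g s), h s) * push p h (h s))

lemma sum_sub_sum_mul_div_log_two_le {p r : S → ℝ} (hp : ∀ s, 0 ≤ p s)
    (hr : ∀ s, 0 < p s → 0 < r s) :
    (∑ s, p s - ∑ s, p s * r s) / log 2 ≤ ∑ s, p s * -logb 2 (r s) := by
  rw [← sum_sub_distrib, sum_div]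
  refine sum_le_sum fun s _ => ?_
  rcases (hp s).eq_or_lt with hps | hps
  · simp [← hps]
  have hlog : log (r s) ≤ r s - 1 := log_le_sub_one_of_pos (hr s hps)
  rw [logb, ← neg_div, ← mul_div_assoc, div_le_div_iff_of_pos_right (log_pos one_lt_two)]
  nlinarith

lemma sum_mul_cmiRatio_le (p : S → ℝ) (hp : ∀ s, 0 ≤ p s)
    (f : S → T) (g : S → V) (h : S → W) :
    ∑ s, p s * cmiRatio p f g h s ≤ ∑ s, p s := by
  set pfh := push p fun s => (f s, h s)
  set pgh := push p fun s => (g s, h s)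
  set pq := push p fun s => ((f s, g s), h s)
  set ph := push p h
  have hpq : ∀ v : (T × V) × W,
      pq v * (pfh (v.1.1, v.2) * pgh (v.1.2, v.2) / (pq v * ph v.2))
        ≤ pfh (v.1.1, v.2) * pgh (v.1.2, v.2) / ph v.2 := by
    intro v
    rcases eq_or_ne (pq v) 0 with hq | hq
    · rw [hq, zero_mul]
      exact div_nonneg (mul_nonneg (push_nonneg hp _ _) (push_nonneg hp _ _)) (push_nonneg hp _ _)
    · rw [← mul_div_assoc, mul_div_mul_left _ _ hq]
  have hfiber : ∀ c, ∑ a, ∑ b, pfh (a, c) * pgh (b, c) / ph c ≤ ph c := by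
    intro c
    have hf : ∑ a, pfh (a, c) = ph c := sum_push_prod_mk_left p f h c
    have hg : ∑ b, pgh (b, c) = ph c := sum_push_prod_mk_left p g h c
    have hprod : ∑ a, ∑ b, pfh (a, c) * pgh (b, c) / ph c
        = (∑ a, pfh (a, c)) * (∑ b, pgh (b, c)) / ph c := by
      rw [sum_mul_sum, sum_div]
      simp only [sum_div]
    rw [hprod, hf, hg]
    rcases eq_or_ne (ph c) 0 with hc | hc
    · simp [hc]
    · rw [mul_div_cancel_right₀ _ hc]
  calc _ = ∑ v, pq v * (pfh (v.1.1, v.2) * pgh (v.1.2, v.2) / (pq v * ph v.2)) :=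
        (sum_push_mul p (fun s => ((f s, g s), h s)) _).symm
    _ ≤ ∑ v : (T × V) × W, pfh (v.1.1, v.2) * pgh (v.1.2, v.2) / ph v.2 :=
        sum_le_sum fun v _ => hpq v
    _ = ∑ c, ∑ a, ∑ b, pfh (a, c) * pgh (b, c) / ph c := by
        rw [Fintype.sum_prod_type, sum_comm]
        exact sum_congr rfl fun c _ => Fintype.sum_prod_type _
    _ ≤ ∑ c, ph c := sum_le_sum fun c _ => hfiber c
    _ = ∑ s, p s := sum_push p h

lemma cmiOf_eq_sum_mul_neg_logb (p : S → ℝ) (hp : ∀ s, 0 ≤ p s)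
    (f : S → T) (g : S → V) (h : S → W) :
    cmiOf p f g h = ∑ s, p s * -logb 2 (cmiRatio p f g h s) := by
  simp only [cmiOf, condEnt, cmiRatio, entOf_eq_neg_sum, ← sum_neg_distrib, ← sum_sub_distrib,
    ← sum_add_distrib]
  refine sum_congr rfl fun s _ => ?_
  rcases (hp s).eq_or_lt with hps | hps
  · simp [← hps]
  have hfh := (push_apply_pos hp (fun s => (f s, h s)) hps).ne'
  have hgh := (push_apply_pos hp (fun s => (g s, h s)) hps).ne'
  have hfgh := (push_apply_pos hp (fun s => ((f s, g s), h s)) hps).ne'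
  have hh := (push_apply_pos hp h hps).ne'
  rw [logb_div (mul_ne_zero hfh hgh) (mul_ne_zero hfgh hh), logb_mul hfh hgh, logb_mul hfgh hh]
  ring

lemma cmiOf_nonneg {p : S → ℝ} (hp : ∀ s, 0 ≤ p s) (f : S → T) (g : S → V) (h : S → W) :
    0 ≤ cmiOf p f g h := by
  rw [cmiOf_eq_sum_mul_neg_logb p hp]
  refine le_trans (div_nonneg ?_ (log_pos one_lt_two).le) (sum_sub_sum_mul_div_log_two_le hp ?_)
  · exact sub_nonneg.2 (sum_mul_cmiRatio_le p hp f g h)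
  · intro s hps
    unfold cmiRatio
    exact div_pos (mul_pos (push_apply_pos hp _ hps) (push_apply_pos hp _ hps))
      (mul_pos (push_apply_pos hp _ hps) (push_apply_pos hp h hps))

end push

lemma cmiOf_add_cmiOf_add_miOf_sub_miOf {S U X Y Z : Type*} [Fintype S] [Fintype U] [Fintype X]
    [Fintype Y] [Fintype Z] (p : S → ℝ) (u : S → U) (x : S → X) (y : S → Y) (z : S → Z)
    (hdet : condEnt p x (fun s => (u s, y s, z s)) = 0) :
    cmiOf p u y x + cmiOf p z x (fun s => (u s, y s)) + (miOf p u x - miOf p u y)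
      = condEnt p x y := by
  have swap_yx : entOf p (fun s => (y s, x s)) = entOf p (fun s => (x s, y s)) :=
    entOf_congr p fun s s' => by simp only [Prod.ext_iff]; tauto
  have swap_uyx : entOf p (fun s => ((u s, y s), x s)) = entOf p (fun s => (x s, (u s, y s))) :=
    entOf_congr p fun s s' => by simp only [Prod.ext_iff]; tauto
  have assoc_zx : entOf p (fun s => ((z s, x s), (u s, y s)))
      = entOf p (fun s => (x s, (u s, y s, z s))) :=
    entOf_congr p fun s s' => by simp only [Prod.ext_iff]; tauto
  have assoc_z : entOf p (fun s => (z s, (u s, y s))) = entOf p (fun s => (u s, y s, z s)) :=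
    entOf_congr p fun s s' => by simp only [Prod.ext_iff]; tauto
  simp only [cmiOf, condEnt, miOf] at hdet ⊢
  linarith

lemma max_add_add_sub_le {a b : ℝ} (ha : 0 ≤ a) (hb : 0 ≤ b) (c R : ℝ) :
    max (a + b + c - R) 0 ≤ a + b + max (c - R) 0 :=
  max_le (by linarith [le_max_left (c - R) 0]) (by linarith [le_max_right (c - R) 0])

theorem stmt5_general {U X Y Z : Type*} [Fintype U] [Fintype X] [Fintype Y] [Fintype Z]
    (p : U × X × Y × Z → ℝ) (PXY : X × Y → ℝ) (R : ℝ)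
    (hp : ∀ s, 0 ≤ p s)
    (hdet : condEnt p (fun s => s.2.1) (fun s => (s.1, s.2.2.1, s.2.2.2)) = 0) :
    kl (push p (fun s => (s.2.1, s.2.2.1))) PXY
        + cmiOf p (fun s => s.1) (fun s => s.2.2.1) (fun s => s.2.1)
        + cmiOf p (fun s => s.2.2.2) (fun s => s.2.1) (fun s => (s.1, s.2.2.1))
        + max (miOf p (fun s => s.1) (fun s => s.2.1)
            - miOf p (fun s => s.1) (fun s => s.2.2.1) - R) 0
      ≥ kl (push p (fun s => (s.2.1, s.2.2.1))) PXY
        + max (condEnt p (fun s => s.2.1) (fun s => s.2.2.1) - R) 0 := by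
  have hid := cmiOf_add_cmiOf_add_miOf_sub_miOf p (fun s => s.1) (fun s => s.2.1)
    (fun s => s.2.2.1) (fun s => s.2.2.2) hdet
  have h₁ := cmiOf_nonneg hp (fun s => s.1) (fun s => s.2.2.1) (fun s => s.2.1)
  have h₂ := cmiOf_nonneg hp (fun s => s.2.2.2) (fun s => s.2.1) (fun s => (s.1, s.2.2.1))
  have key := max_add_add_sub_le h₁ h₂ (miOf p (fun s => s.1) (fun s => s.2.1)
    - miOf p (fun s => s.1) (fun s => s.2.2.1)) R
  rw [hid] at key
  linarith

theorem stmt5 {U X Y Z : Type*} [Fintype U] [Fintype X] [Fintype Y] [Fintype Z]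
    (p : U × X × Y × Z → ℝ) (PXY : X × Y → ℝ) (R : ℝ) (hR : 0 ≤ R)
    (hp : ∀ s, 0 ≤ p s) (hp1 : ∑ s, p s = 1)
    (hP : ∀ a, 0 ≤ PXY a) (hP1 : ∑ a, PXY a = 1)
    (hac : ∀ a, PXY a = 0 → push p (fun s => (s.2.1, s.2.2.1)) a = 0)
    (hdet : condEnt p (fun s => s.2.1) (fun s => (s.1, s.2.2.1, s.2.2.2)) = 0) :
    kl (push p (fun s => (s.2.1, s.2.2.1))) PXY
        + cmiOf p (fun s => s.1) (fun s => s.2.2.1) (fun s => s.2.1)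
        + cmiOf p (fun s => s.2.2.2) (fun s => s.2.1) (fun s => (s.1, s.2.2.1))
        + max (miOf p (fun s => s.1) (fun s => s.2.1)
            - miOf p (fun s => s.1) (fun s => s.2.2.1) - R) 0
      ≥ kl (push p (fun s => (s.2.1, s.2.2.1))) PXY
        + max (condEnt p (fun s => s.2.1) (fun s => s.2.2.1) - R) 0 :=
  stmt5_general p PXY R hp hdet
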